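/- arXiv:2412.09518 — 2 statements merged into one kernel-verified Lean document; each statement's English description precedes it below -/
import Mathlib

section
/- Let δ > 0 be real, let L > M > 0 be natural numbers, and let c be a real number with 0 < c, c·(L−M) ≤ log(1+δ/2), and c·M ≤ log 2. Then ∑_{l=M+1}^{L} C(L,l) c^l ≤ δ. -/
/-! By the binomial theorem the tail is at most `(1 + c) ^ L - (1 + c) ^ M
= (1 + c) ^ M * ((1 + c) ^ (L - M) - 1)`, and `1 + c ≤ exp c` turns the two logarithmic
hypotheses into `(1 + c) ^ M ≤ 2` and `(1 + c) ^ (L - M) ≤ 1 + δ / 2`. -/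

open Finset Real

theorem one_add_pow_eq_sum_choose_mul_pow {R : Type*} [CommSemiring R] (x : R) (n : ℕ) :
    (1 + x) ^ n = ∑ l ∈ range (n + 1), (n.choose l : R) * x ^ l := by
  simp only [add_comm 1 x, add_pow, one_pow, mul_one, mul_comm]

theorem sum_Icc_choose_mul_pow_le {R : Type*} [CommRing R] [PartialOrder R] [IsOrderedRing R]
    {x : R} (hx : 0 ≤ x) {M L : ℕ} (hML : M ≤ L) :
    ∑ l ∈ Icc (M + 1) L, (L.choose l : R) * x ^ l ≤ (1 + x) ^ M * ((1 + x) ^ (L - M) - 1) := by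
  have head_ge : (1 + x) ^ M ≤ ∑ l ∈ range (M + 1), (L.choose l : R) * x ^ l := by
    rw [one_add_pow_eq_sum_choose_mul_pow]
    gcongr
  have split : ∑ l ∈ range (M + 1), (L.choose l : R) * x ^ l
      + ∑ l ∈ Icc (M + 1) L, (L.choose l : R) * x ^ l = (1 + x) ^ L := by
    rw [← Ico_add_one_right_eq_Icc, sum_range_add_sum_Ico _ (by omega),
      one_add_pow_eq_sum_choose_mul_pow]
  rw [mul_sub, mul_one, ← pow_add, Nat.add_sub_cancel' hML,
    le_sub_iff_add_le', ← split]
  exact add_le_add_left head_ge _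

theorem one_add_pow_le_of_mul_le_log {c a : ℝ} {n : ℕ} (hc : 0 ≤ 1 + c) (ha : 0 < a)
    (h : c * n ≤ log a) : (1 + c) ^ n ≤ a :=
  calc (1 + c) ^ n ≤ exp c ^ n := pow_le_pow_left₀ hc (by linarith [add_one_le_exp c]) n
    _ = exp (c * n) := by rw [← exp_nat_mul, mul_comm]
    _ ≤ a := (le_log_iff_exp_le ha).1 h

theorem binomial_tail_le_delta_general (δ : ℝ) (hδ : 0 < δ) (L M : ℕ) (hML : M < L)
    (c : ℝ) (hc : 0 < c) (h1 : c * ((L : ℝ) - (M : ℝ)) ≤ Real.log (1 + δ / 2))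
    (h2 : c * (M : ℝ) ≤ Real.log 2) :
    ∑ l ∈ Finset.Icc (M + 1) L, (L.choose l : ℝ) * c ^ l ≤ δ := by
  have head : (1 + c) ^ M ≤ 2 := one_add_pow_le_of_mul_le_log (by linarith) two_pos h2
  have gap : (1 + c) ^ (L - M) ≤ 1 + δ / 2 :=
    one_add_pow_le_of_mul_le_log (by linarith) (by linarith) (by rwa [Nat.cast_sub hML.le])
  have gap_nonneg : 0 ≤ (1 + c) ^ (L - M) - 1 := sub_nonneg.2 (one_le_pow₀ (by linarith))
  calc ∑ l ∈ Icc (M + 1) L, (L.choose l : ℝ) * c ^ l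
      ≤ (1 + c) ^ M * ((1 + c) ^ (L - M) - 1) := sum_Icc_choose_mul_pow_le hc.le hML.le
    _ ≤ 2 * (δ / 2) := mul_le_mul head (by linarith) gap_nonneg zero_le_two
    _ = δ := by ring

/-- Let `δ > 0` be real, `L > M > 0` naturals, and `c` real with `0 < c`,
`c·(L−M) ≤ log(1+δ/2)` and `c·M ≤ log 2`.  Then `∑_{l=M+1}^{L} C(L,l) c^l ≤ δ`. -/
theorem binomial_tail_le_delta (δ : ℝ) (hδ : 0 < δ) (L M : ℕ) (hM : 0 < M) (hML : M < L)
    (c : ℝ) (hc : 0 < c) (h1 : c * ((L : ℝ) - (M : ℝ)) ≤ Real.log (1 + δ / 2))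
    (h2 : c * (M : ℝ) ≤ Real.log 2) :
    ∑ l ∈ Finset.Icc (M + 1) L, (L.choose l : ℝ) * c ^ l ≤ δ :=
  binomial_tail_le_delta_general δ hδ L M hML c hc h1 h2
end

section
/- Let δ > 0 be real and let L > M ≥ 1 be natural numbers such that log(1+δ/2)/(L−M) ≤ (log 2)/M. Setting θ* = log(1+δ/2)/(L−M), one has (1 + sin θ*)^L − (1 + sin θ*)^M ≤ δ. -/
/-- Worst-case half of the paper's Theorem 1: for `δ > 0`, naturals `L > M ≥ 1` with
`log(1+δ/2)/(L−M) ≤ (log 2)/M`, setting `θ* = log(1+δ/2)/(L−M)` one has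
`(1 + sin θ*)^L − (1 + sin θ*)^M ≤ δ`. -/
theorem spd_worst_case_truncation_bound (δ : ℝ) (hδ : 0 < δ) (L M : ℕ) (hM : 1 ≤ M)
    (hML : M < L)
    (h : Real.log (1 + δ / 2) / ((L : ℝ) - (M : ℝ)) ≤ Real.log 2 / (M : ℝ)) :
    (1 + Real.sin (Real.log (1 + δ / 2) / ((L : ℝ) - (M : ℝ)))) ^ L -
      (1 + Real.sin (Real.log (1 + δ / 2) / ((L : ℝ) - (M : ℝ)))) ^ M ≤ δ := by
  set θ := Real.log (1 + δ / 2) / ((L : ℝ) - (M : ℝ)) with hθdef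
  have hMpos : (0:ℝ) < (M:ℝ) := by exact_mod_cast Nat.lt_of_lt_of_le Nat.zero_lt_one hM
  have hLM : (0:ℝ) < (L : ℝ) - (M : ℝ) := by
    have : (M:ℝ) < (L:ℝ) := by exact_mod_cast hML
    linarith
  have hlogpos : 0 ≤ Real.log (1 + δ / 2) := Real.log_nonneg (by linarith)
  have hθ0 : 0 ≤ θ := div_nonneg hlogpos hLM.le
  have hθle : θ ≤ Real.log 2 := by
    have : Real.log 2 / (M:ℝ) ≤ Real.log 2 := by
      apply div_le_self (Real.log_nonneg (by norm_num))
      exact_mod_cast hM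
    linarith
  have hθpi : θ ≤ Real.pi := by
    have := Real.log_two_lt_d9
    have := Real.pi_gt_three
    linarith
  have hsin0 : 0 ≤ Real.sin θ := Real.sin_nonneg_of_nonneg_of_le_pi hθ0 hθpi
  have hsinle : Real.sin θ ≤ θ := Real.sin_le hθ0
  set a := 1 + Real.sin θ with ha
  have ha1 : 1 ≤ a := by linarith
  have haexp : a ≤ Real.exp θ := by
    have := Real.add_one_le_exp θ
    linarith
  have ha0 : 0 ≤ a := by linarith
  -- a^M ≤ 2
  have hθM : θ * M ≤ Real.log 2 := by
    rw [← le_div_iff₀ hMpos]; exact h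
  have haM : a ^ M ≤ 2 := by
    calc a ^ M ≤ (Real.exp θ) ^ M := pow_le_pow_left₀ ha0 haexp M
    _ = Real.exp (θ * M) := by rw [← Real.exp_nat_mul]; ring_nf
    _ ≤ Real.exp (Real.log 2) := Real.exp_le_exp.2 hθM
    _ = 2 := Real.exp_log (by norm_num)
  -- a^(L-M) ≤ 1 + δ/2
  have hcast : ((L - M : ℕ) : ℝ) = (L : ℝ) - (M : ℝ) := by
    rw [Nat.cast_sub hML.le]
  have haK : a ^ (L - M) ≤ 1 + δ / 2 := by
    calc a ^ (L - M) ≤ (Real.exp θ) ^ (L - M) := pow_le_pow_left₀ ha0 haexp _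
    _ = Real.exp (θ * ((L - M : ℕ) : ℝ)) := by rw [← Real.exp_nat_mul]; ring_nf
    _ = Real.exp (Real.log (1 + δ / 2)) := by
        rw [hcast, hθdef, div_mul_cancel₀ _ (ne_of_gt hLM)]
    _ = 1 + δ / 2 := Real.exp_log (by linarith)
  have hsplit : a ^ L = a ^ M * a ^ (L - M) := by
    rw [← pow_add, Nat.add_sub_cancel' hML.le]
  have h1 : a ^ L - a ^ M = a ^ M * (a ^ (L - M) - 1) := by
    rw [hsplit]; ring
  rw [h1]
  have hK1 : 0 ≤ a ^ (L - M) - 1 := by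
    linarith [one_le_pow₀ ha1 (n := L - M)]
  calc a ^ M * (a ^ (L - M) - 1) ≤ 2 * (δ / 2) := by
        apply mul_le_mul haM (by linarith) hK1 (by norm_num)
  _ = δ := by ring
end
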